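/- arXiv:2601.16243 — 2 statements merged into one kernel-verified Lean document; each statement's English description precedes it below -/
import Mathlib

section
/- Let d be a positive integer, G a finite group, F a GCA on G^{Z^d}, and let μ be the Haar probability measure on the compact topological group G^{Z^d} (equivalently, the infinite product over Z^d of the uniform probability measure on G), defined on the Borel σ-algebra. Then F is topologically transitive if and only if F is ergodic with respect to μ (in particular, F is μ-measure-preserving). -/
open MeasureTheory

/-- A self-map `T` of a topological space `X` is topologically transitive if for all
nonempty open sets `U, V ⊆ X` there exists `n ≥ 0` with `T^n(U) ∩ V ≠ ∅`. -/
def TopologicallyTransitive {X : Type*} [TopologicalSpace X] (T : X → X) : Prop :=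
  ∀ U V : Set X, IsOpen U → IsOpen V → U.Nonempty → V.Nonempty →
    ∃ n : ℕ, (T^[n] '' U ∩ V).Nonempty

/-!
Ergodic ⇒ transitive holds for any continuous map preserving a measure that charges open sets:
for open `U`, `V` the open set `⋃ n, F^[n] ⁻¹' V` is mapped into itself by `F⁻¹`, so by ergodicity
it has full measure (it contains `V`) and therefore meets `U`.

Transitive ⇒ ergodic: a transitive GCA is surjective (its range is closed), hence preserves the
Haar measure. Given a finite window `I`, transitivity applied to cylinders prescribing every
pattern of `G^I` on pairwise disjoint translates of `I` gives an `n` such that the homomorphism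
`x ↦ (x|_I, (F^n x)|_I)` onto `G^I × G^I` is surjective; it therefore pushes `μ` forward to the
uniform measure, so `μ (F^[n] ⁻¹' C ∩ C) = μ C ^ 2` for every cylinder `C` on `I`. Approximating an
invariant set `A` by cylinders then yields `μ A = μ A ^ 2`.
-/

open Set Function
open scoped symmDiff ENNReal

theorem TopologicallyTransitive.surjective {X : Type*} [TopologicalSpace X] [CompactSpace X]
    [T2Space X] [Nonempty X] {T : X → X} (hT : TopologicallyTransitive T) (hcont : Continuous T) :
    Surjective T := by
  intro y
  by_contra hy
  obtain ⟨x⟩ := ‹Nonempty X›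
  obtain ⟨U, V, hU, hV, hxU, hyV, hUV⟩ := t2_separation fun h : T x = y => hy ⟨x, h⟩
  have hR : IsClosed (range T) := (isCompact_range hcont).isClosed
  obtain ⟨n, _, ⟨z, hzU, rfl⟩, hzV, hzR⟩ :=
    hT U (V ∩ (range T)ᶜ) hU (hV.inter hR.isOpen_compl) ⟨_, hxU⟩ ⟨y, hyV, hy⟩
  cases n with
  | zero => exact hUV.notMem_of_mem_left hzU hzV
  | succ n => exact hzR ⟨T^[n] z, (iterate_succ_apply' T n z).symm⟩

theorem Ergodic.topologicallyTransitive {X : Type*} [TopologicalSpace X] [MeasurableSpace X]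
    [OpensMeasurableSpace X] {μ : Measure X} [IsFiniteMeasure μ] [μ.IsOpenPosMeasure]
    {T : X → X} (hT : Ergodic T μ) (hcont : Continuous T) : TopologicallyTransitive T := by
  intro U V hU hV hUne hVne
  set A := ⋃ n : ℕ, T^[n] ⁻¹' V
  have hA : IsOpen A := isOpen_iUnion fun n => hV.preimage (hcont.iterate n)
  have hTA : T ⁻¹' A ⊆ A := by
    rintro x ⟨n, ⟨n, rfl⟩, hx⟩
    exact mem_iUnion.2 ⟨n + 1, hx⟩
  rcases hT.ae_empty_or_univ_of_preimage_ae_le hA.measurableSet.nullMeasurableSet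
    hTA.eventuallyLE with h | h
  · exact absurd (measure_mono_null (subset_iUnion_of_subset 0 subset_rfl) (ae_eq_empty.1 h))
      (hV.measure_ne_zero μ hVne)
  · have hUA : μ (U ∩ A) ≠ 0 := by
      rw [measure_congr (ae_eq_refl U |>.inter h), inter_univ]
      exact hU.measure_ne_zero μ hUne
    obtain ⟨x, hxU, hxA⟩ := nonempty_of_measure_ne_zero hUA
    obtain ⟨n, hn⟩ := mem_iUnion.1 hxA
    exact ⟨n, T^[n] x, mem_image_of_mem _ hxU, hn⟩

theorem ergodic_iff_measurePreserving_and_measure_symmDiff_eq_zero {X : Type*}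
    [MeasurableSpace X] {μ : Measure X} [IsProbabilityMeasure μ] {T : X → X} :
    Ergodic T μ ↔ MeasurePreserving T μ μ ∧
      ∀ A, MeasurableSet A → μ (symmDiff (T ⁻¹' A) A) = 0 → μ A = 0 ∨ μ A = 1 := by
  refine ⟨fun h => ⟨h.toMeasurePreserving, fun A hA hinv => ?_⟩,
    fun ⟨hT, h⟩ => ⟨hT, ⟨fun A hA hinv => ?_⟩⟩⟩
  · rcases h.quasiErgodic.ae_empty_or_univ₀ hA.nullMeasurableSet
      (measure_symmDiff_eq_zero_iff.1 hinv) with h0 | h1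
    · exact .inl (by simpa using measure_congr h0)
    · exact .inr (by simpa using measure_congr h1)
  · rw [Filter.eventuallyConst_set', ae_eq_empty, ae_eq_univ, prob_compl_eq_zero_iff hA]
    exact h A hA (by simp [hinv])

theorem preErgodic_of_measureDense {X : Type*} [MeasurableSpace X] {μ : Measure X}
    [IsProbabilityMeasure μ] {T : X → X} (hT : MeasurePreserving T μ μ) {𝒜 : Set (Set X)}
    (h𝒜 : μ.MeasureDense 𝒜) (hmix : ∀ C ∈ 𝒜, ∃ n, μ (T^[n] ⁻¹' C ∩ C) = μ C * μ C) :
    PreErgodic T μ := by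
  refine ⟨fun A hA hinv => ?_⟩
  rw [Filter.eventuallyConst_set', ae_eq_empty, ae_eq_univ, prob_compl_eq_zero_iff hA]
  set a := μ.real A
  suffices a = a ^ 2 by
    rcases mul_eq_zero.1 (show a * (1 - a) = 0 by linear_combination this) with h | h
    · exact .inl ((measureReal_eq_zero_iff).1 h)
    · exact .inr (by rw [← ofReal_measureReal, show μ.real A = 1 by linarith, ENNReal.ofReal_one])
  refine eq_of_forall_dist_le fun ε hε => ?_
  obtain ⟨C, hC𝒜, hAC⟩ := h𝒜.approx A hA (measure_ne_top μ A) (ε / 4) (by positivity)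
  obtain ⟨n, hn⟩ := hmix C hC𝒜
  have hC := h𝒜.measurable C hC𝒜
  set c := μ.real C
  set δ := μ.real (A ∆ C)
  have hδ : δ ≤ ε / 4 := ENNReal.toReal_le_of_le_ofReal (by positivity) hAC.le
  have hac : |a - c| ≤ δ := abs_measureReal_sub_le_measureReal_symmDiff hA.nullMeasurableSet
    hC.nullMeasurableSet
  have hsub : A ∆ (T^[n] ⁻¹' C ∩ C) ⊆ T^[n] ⁻¹' (A ∆ C) ∪ A ∆ C := by
    intro x
    have hx : T^[n] x ∈ A ↔ x ∈ A := Set.ext_iff.1 (IsFixedPt.preimage_iterate hinv n) x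
    simp only [mem_symmDiff, mem_union, mem_inter_iff, mem_preimage, hx]
    tauto
  have hmixA : |a - c ^ 2| ≤ 2 * δ := by
    have hreal : μ.real (T^[n] ⁻¹' C ∩ C) = c ^ 2 := by
      simp only [measureReal_def, hn, ENNReal.toReal_mul, sq, c]
    calc |a - c ^ 2| ≤ μ.real (A ∆ (T^[n] ⁻¹' C ∩ C)) := hreal ▸
          abs_measureReal_sub_le_measureReal_symmDiff hA.nullMeasurableSet
            (((hT.iterate n).measurable hC).inter hC).nullMeasurableSet
      _ ≤ μ.real (T^[n] ⁻¹' (A ∆ C)) + δ :=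
          (measureReal_mono hsub).trans (measureReal_union_le _ _)
      _ = 2 * δ := by
          rw [(hT.iterate n).measureReal_preimage (hA.symmDiff hC).nullMeasurableSet]; ring
  have hsq : |c ^ 2 - a ^ 2| ≤ 2 * δ := by
    have h0 : 0 ≤ a + c := add_nonneg measureReal_nonneg measureReal_nonneg
    have h2 : a + c ≤ 2 := by
      linarith [show a ≤ 1 from measureReal_le_one, show c ≤ 1 from measureReal_le_one]
    calc |c ^ 2 - a ^ 2| = |a - c| * (a + c) := by
          rw [show c ^ 2 - a ^ 2 = -((a - c) * (a + c)) by ring, abs_neg, abs_mul, abs_of_nonneg h0]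
      _ ≤ δ * 2 := mul_le_mul hac h2 h0 ((abs_nonneg _).trans hac)
      _ = 2 * δ := mul_comm _ _
  calc dist a (a ^ 2) ≤ |a - c ^ 2| + |c ^ 2 - a ^ 2| :=
        (Real.dist_eq _ _).trans_le (abs_sub_le _ _ _)
    _ ≤ ε := by linarith

theorem measure_preimage_eq_ncard_div {X P : Type*} [Group X] [MeasurableSpace X]
    [MeasurableMul X] {μ : Measure X} [IsProbabilityMeasure μ] [μ.IsMulLeftInvariant]
    [Group P] [Finite P] (ψ : X →* P) (hsurj : Surjective ψ)
    (hfib : ∀ p, MeasurableSet (ψ ⁻¹' {p})) (s : Set P) :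
    μ (ψ ⁻¹' s) = s.ncard / Nat.card P := by
  classical
  have hconst : ∀ p, μ (ψ ⁻¹' {p}) = μ (ψ ⁻¹' {1}) := by
    intro p
    obtain ⟨g, hg⟩ := hsurj p⁻¹
    rw [← measure_preimage_mul μ g (ψ ⁻¹' {1})]
    congr 1
    ext x
    simp only [mem_preimage, mem_singleton_iff, map_mul, hg]
    rw [inv_mul_eq_one, eq_comm]
  have hsum : ∀ t : Finset P, μ (ψ ⁻¹' t) = t.card * μ (ψ ⁻¹' {1}) := by
    intro t
    simp [← sum_measure_preimage_singleton t fun p _ => hfib p, hconst]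
  have : Fintype P := Fintype.ofFinite P
  have hone : μ (ψ ⁻¹' {1}) = (Nat.card P : ℝ≥0∞)⁻¹ :=
    ENNReal.eq_inv_of_mul_eq_one_left (by simpa [mul_comm] using (hsum Finset.univ).symm)
  rw [← s.toFinite.coe_toFinset, hsum, hone, ← div_eq_mul_inv, Set.ncard_coe_finset]

open Pointwise in
theorem exists_injective_add_translate {A : Type*} [AddCommGroup A] [IsAddTorsionFree A]
    [Infinite A] (I : Finset A) (K : Type*) [Finite K] :
    ∃ u : K → A, Injective fun q : K × I => (q.2 : A) + u q.1 := by
  obtain ⟨e, he⟩ : ∃ e : K → ℤ, Injective e :=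
    ⟨_, Nat.cast_injective.comp (Fin.val_injective.comp (Finite.equivFin K).injective)⟩
  -- `u k = e k • t` for a `t` with no nonzero difference of the `e k` carrying it into `I - I`
  set B : Set A := ⋃ j ∈ range (fun k : K × K => e k.1 - e k.2) \ {0},
    (fun t => j • t) ⁻¹' ((I : Set A) - I)
  have hB : B.Finite := ((finite_range _).sdiff).biUnion fun j hj =>
    (I.finite_toSet.sub I.finite_toSet).preimage (zsmul_right_injective hj.2).injOn
  obtain ⟨t, ht⟩ := hB.exists_notMem
  refine ⟨fun k => e k • t, ?_⟩
  rintro ⟨k, v, hv⟩ ⟨k', w, hw⟩ h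
  obtain rfl : k = k' := by
    by_contra hkk
    have hvw : v - w = (e k' - e k) • t := by
      simp only at h
      rw [sub_smul, sub_eq_sub_iff_add_eq_add, h, add_comm]
    refine ht (mem_iUnion₂.2
      ⟨e k' - e k, ⟨⟨(k', k), rfl⟩, sub_ne_zero.2 (he.ne (Ne.symm hkk))⟩, ?_⟩)
    rw [mem_preimage, ← hvw]
    exact sub_mem_sub hv hw
  simp only [add_left_inj] at h
  simp [h]

theorem measureDense_cylinders {ι G : Type*} [Countable ι] [Countable G] [TopologicalSpace G]
    [DiscreteTopology G] [MeasurableSpace (ι → G)] [BorelSpace (ι → G)] (μ : Measure (ι → G))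
    [IsFiniteMeasure μ] :
    μ.MeasureDense {C | ∃ (I : Finset ι) (S : Set (I → G)), cylinder I S = C} := by
  let _ : MeasurableSpace G := ⊤
  have : DiscreteMeasurableSpace G := ⟨fun _ => trivial⟩
  have : BorelSpace G := DiscreteMeasurableSpace.toBorelSpace
  have hgen : ‹MeasurableSpace (ι → G)› = .generateFrom (measurableCylinders fun _ => G) := by
    rw [generateFrom_measurableCylinders, BorelSpace.measurable_eq (α := ι → G),
      Pi.borelSpace.measurable_eq]
  convert Measure.MeasureDense.of_generateFrom_isSetAlgebra_finite μ
    isSetAlgebra_measurableCylinders hgen using 1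
  ext C
  simp [mem_measurableCylinders, eq_comm, MeasurableSet.of_discrete]

section CellularAutomaton

variable {ι G : Type*} [Group G] [TopologicalSpace G] [DiscreteTopology G]

theorem TopologicallyTransitive.exists_iterate_restrict_eq_one [AddCommGroup ι]
    [IsAddTorsionFree ι] [Infinite ι] [Finite G] {F : (ι → G) → (ι → G)}
    (hF : ∀ (u : ι) (c : ι → G), F (fun v => c (v + u)) = fun v => F c (v + u))
    (htrans : TopologicallyTransitive F) (I : Finset ι) :
    ∃ n, ∀ p : I → G, ∃ z : ι → G, I.restrict z = p ∧ I.restrict (F^[n] z) = 1 := by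
  -- `U` prescribes the pattern `p` on the translate `I + u p`, for every `p` at once, and `V`
  -- prescribes `1` there; a point of `U` landing in `V` yields all the required `z` by shifting.
  obtain ⟨u, hu⟩ := exists_injective_add_translate I (I → G)
  set obs : (ι → G) → ((I → G) × I → G) := fun z q => z (q.2 + u q.1)
  have hopen : ∀ t, IsOpen (obs ⁻¹' {t}) := fun t =>
    (isOpen_discrete _).preimage (continuous_pi fun q => continuous_apply _)
  have hne : ∀ t, (obs ⁻¹' {t}).Nonempty := fun t => hu.surjective_comp_right t
  obtain ⟨n, _, ⟨x, hxU, rfl⟩, hxV⟩ :=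
    htrans _ _ (hopen fun q => q.1 q.2) (hopen 1) (hne _) (hne _)
  refine ⟨n, fun p => ⟨fun v => x (v + u p), funext fun v => congr_fun hxU (p, v), ?_⟩⟩
  rw [(show Function.Commute F fun c v => c (v + u p) from hF (u p)).iterate_left n x]
  exact funext fun v => congr_fun hxV (p, v)

theorem TopologicallyTransitive.exists_surjective_restrict_prod_iterate [AddCommGroup ι]
    [IsAddTorsionFree ι] [Infinite ι] [Finite G] {F : (ι → G) →* (ι → G)}
    (hF : ∀ (u : ι) (c : ι → G), F (fun v => c (v + u)) = fun v => F c (v + u))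
    (hFc : Continuous F) (htrans : TopologicallyTransitive F) (I : Finset ι) :
    ∃ n, Surjective fun x : ι → G => (I.restrict x, I.restrict (F^[n] x)) := by
  obtain ⟨n, hn⟩ := htrans.exists_iterate_restrict_eq_one hF I
  refine ⟨n, fun ⟨p, q⟩ => ?_⟩
  obtain ⟨w, hw⟩ : ∃ w : ι → G, I.restrict (F^[n] w) = q := by
    obtain ⟨x, rfl⟩ := Subtype.val_injective.surjective_comp_right q
    obtain ⟨w, rfl⟩ := (htrans.surjective hFc).iterate n x
    exact ⟨w, rfl⟩
  obtain ⟨z, hz, hFz⟩ := hn (p * (I.restrict w)⁻¹)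
  refine ⟨z * w, Prod.ext ?_ ?_⟩
  · change I.restrict z * I.restrict w = p
    rw [hz, inv_mul_cancel_right]
  · change I.restrict (F^[n] (z * w)) = q
    rw [iterate_map_mul]
    change I.restrict (F^[n] z) * I.restrict (F^[n] w) = q
    rw [hFz, one_mul, hw]

variable [MeasurableSpace (ι → G)] [BorelSpace (ι → G)]

theorem measure_cylinder_eq_ncard_div [Finite G] (μ : Measure (ι → G)) [IsProbabilityMeasure μ]
    [μ.IsMulLeftInvariant] (I : Finset ι) (S : Set (I → G)) :
    μ (cylinder I S) = S.ncard / Nat.card (I → G) :=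
  measure_preimage_eq_ncard_div (MonoidHom.mk' (I.restrict : (ι → G) → (I → G)) fun _ _ => rfl)
    Subtype.val_injective.surjective_comp_right
    (fun p => ((isOpen_discrete {p}).preimage
      (continuous_pi fun _ => continuous_apply _)).measurableSet) S

theorem measure_preimage_iterate_cylinder_inter [Finite G] (μ : Measure (ι → G))
    [IsProbabilityMeasure μ] [μ.IsMulLeftInvariant] {F : (ι → G) →* (ι → G)} (hFc : Continuous F)
    {I : Finset ι} {n : ℕ}
    (hsurj : Surjective fun x : ι → G => (I.restrict x, I.restrict (F^[n] x)))
    (S : Set (I → G)) :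
    μ (F^[n] ⁻¹' cylinder I S ∩ cylinder I S) = μ (cylinder I S) * μ (cylinder I S) := by
  set ψ : (ι → G) →* (I → G) × (I → G) :=
    MonoidHom.mk' (fun x => (I.restrict x, I.restrict (F^[n] x))) fun a b => by
      rw [iterate_map_mul]; rfl
  have hψ : Continuous ψ := (continuous_pi fun _ => continuous_apply _).prodMk
    (continuous_pi fun _ => (continuous_apply _).comp (hFc.iterate n))
  have hset : F^[n] ⁻¹' cylinder I S ∩ cylinder I S = ψ ⁻¹' (S ×ˢ S) := by
    ext x
    exact and_comm
  rw [hset, measure_preimage_eq_ncard_div ψ hsurj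
    (fun p => ((isOpen_discrete {p}).preimage hψ).measurableSet), measure_cylinder_eq_ncard_div,
    Set.ncard_prod, Nat.card_prod, Nat.cast_mul, Nat.cast_mul, ENNReal.mul_div_mul_comm] <;> simp

theorem TopologicallyTransitive.ergodic [AddCommGroup ι] [Countable ι] [IsAddTorsionFree ι]
    [Infinite ι] [Finite G]
    (μ : Measure (ι → G)) [μ.IsHaarMeasure] [IsProbabilityMeasure μ] {F : (ι → G) →* (ι → G)}
    (hF : ∀ (u : ι) (c : ι → G), F (fun v => c (v + u)) = fun v => F c (v + u))
    (hFc : Continuous F) (htrans : TopologicallyTransitive F) : Ergodic F μ := by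
  have hmp : MeasurePreserving F μ μ := F.measurePreserving hFc (htrans.surjective hFc) rfl
  refine ⟨hmp, preErgodic_of_measureDense hmp (measureDense_cylinders μ) ?_⟩
  rintro _ ⟨I, S, rfl⟩
  obtain ⟨n, hn⟩ := htrans.exists_surjective_restrict_prod_iterate hF hFc I
  exact ⟨n, measure_preimage_iterate_cylinder_inter μ hFc hn S⟩

end CellularAutomaton

theorem stmt10 (d : ℕ) (hd : 0 < d) (G : Type*) [Group G] [Finite G]
    [TopologicalSpace G] [DiscreteTopology G]
    [MeasurableSpace ((Fin d → ℤ) → G)] [BorelSpace ((Fin d → ℤ) → G)]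
    (F : ((Fin d → ℤ) → G) → ((Fin d → ℤ) → G))
    (hFcont : Continuous F)
    (hFhom : ∀ a b : (Fin d → ℤ) → G, F (a * b) = F a * F b)
    (hFshift : ∀ (u : Fin d → ℤ) (c : (Fin d → ℤ) → G),
      F (fun v => c (v + u)) = fun v => F c (v + u))
    (μ : Measure ((Fin d → ℤ) → G))
    (hμ : μ.IsHaarMeasure) (hμprob : IsProbabilityMeasure μ) :
    TopologicallyTransitive F ↔
      (MeasurePreserving F μ μ ∧
        ∀ A : Set ((Fin d → ℤ) → G), MeasurableSet A →
          μ (symmDiff (F ⁻¹' A) A) = 0 → μ A = 0 ∨ μ A = 1) := by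
  have : Infinite (Fin d → ℤ) := Pi.infinite_of_exists_right (⟨0, hd⟩ : Fin d)
  rw [← ergodic_iff_measurePreserving_and_measure_symmDiff_eq_zero]
  exact ⟨fun h => h.ergodic (F := MonoidHom.mk' F hFhom) μ hFshift hFcont,
    fun h => h.topologicallyTransitive hFcont⟩
end

section
/- Let d be a positive integer, G a finite group, F a topologically transitive GCA on G^{Z^d}, and let μ be the Haar probability measure on the compact topological group G^{Z^d} (equivalently, the infinite product over Z^d of the uniform probability measure on G), defined on the Borel σ-algebra. Then F preserves μ and F is ergodically strongly mixing: for all Borel sets A, B ⊆ G^{Z^d}, the sequence μ(F^{-n}(A) ∩ B) converges to μ(A)·μ(B) as n → ∞. -/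
open MeasureTheory Filter

open Function Set
open scoped ENNReal symmDiff Topology

/-!
A transitive continuous endomorphism `F` of a compact group is onto, so it preserves Haar measure.
Mixing is first proved for cylinder sets, preimages under continuous surjections `π₁, π₂` onto
finite groups: once `x ↦ (π₁ (F^[n] x), π₂ x)` is onto, the two events are independent, and this
happens for all large `n` because infinitely many failures would produce a nonconstant locally
constant function invariant under some `F^[p]`, which transitivity rules out. Cylinders are dense for the distance `μ (s ∆ t)`,
which extends mixing to all Borel sets.
-/

namespace TopologicallyTransitive

variable {X : Type*} [TopologicalSpace X] {T : X → X}

/-- If `z` is not in the range, separate it from a point `T z` of the range: no iterate can carry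
a neighbourhood of `T z` into a neighbourhood of `z` outside the (closed) range. -/
theorem surjective_s11 [CompactSpace X] [T2Space X] (hT : TopologicallyTransitive T)
    (hTc : Continuous T) : Surjective T := by
  refine fun z => by_contra fun hz => ?_
  have hne : T z ≠ z := fun h => hz ⟨z, h⟩
  obtain ⟨U, V, hU, hV, hzU, hzV, hUV⟩ := t2_separation hne
  have hrange : IsClosed (range T) := (isCompact_range hTc).isClosed
  obtain ⟨n, -, ⟨x, hxU, rfl⟩, hxV, hx⟩ :=
    hT U (V ∩ (range T)ᶜ) hU (hV.inter hrange.isOpen_compl) ⟨_, hzU⟩ ⟨z, hzV, hz⟩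
  cases n with
  | zero => exact hUV.le_bot ⟨hxU, hxV⟩
  | succ n => exact hx ⟨_, (iterate_succ_apply' T n x).symm⟩

/-- The orbit of `x₀` stays in the fibre of `ψ x₀`, so a neighbourhood of `x₀` whose first `p`
iterates stay there never visits another fibre. -/
theorem apply_eq_of_iterate_invariant {Y : Type*} (hT : TopologicallyTransitive T)
    (hTc : Continuous T) {x₀ : X} (hx₀ : T x₀ = x₀) {ψ : X → Y} (hψ : IsLocallyConstant ψ)
    {p : ℕ} (hp : 0 < p) (hψp : ∀ x, ψ (T^[p] x) = ψ x) (y : X) : ψ y = ψ x₀ := by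
  have hmod : ∀ n x, ψ (T^[n] x) = ψ (T^[n % p] x) := by
    intro n x
    conv_lhs => rw [← Nat.mod_add_div n p]
    induction n / p with
    | zero => rfl
    | succ k ih => rwa [Nat.mul_succ, ← add_assoc, add_comm _ p, iterate_add_apply, hψp]
  set U := ⋂ r ∈ Finset.range p, {x | ψ (T^[r] x) = ψ x₀}
  have hU : IsOpen U := isOpen_biInter_finset fun r _ =>
    (hψ.comp_continuous (hTc.iterate r)).isOpen_fiber _
  have hx₀U : x₀ ∈ U := by simp [U, iterate_fixed hx₀]
  obtain ⟨n, -, ⟨x, hxU, rfl⟩, hxy⟩ := hT U _ hU (hψ.isOpen_fiber (ψ y)) ⟨x₀, hx₀U⟩ ⟨y, rfl⟩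
  rw [← hxy.out, hmod]
  exact mem_iInter₂.mp hxU _ (Finset.mem_range.mpr (Nat.mod_lt n hp))

end TopologicallyTransitive

def MonoidHom.iterate {X : Type*} [Group X] (F : X →* X) (n : ℕ) : X →* X :=
  MonoidHom.mk' F^[n] (iterate_map_mul F n)

namespace TopologicallyTransitive

variable {X K₁ K₂ : Type*} [Group X] [TopologicalSpace X] [Group K₁] [Group K₂]
  {F : X →* X} {π₁ : X →* K₁} {π₂ : X →* K₂}

/-- If the joint images `R` at times `m < m'` agree, then `x ↦ π₁ (F^[m] x)` modulo the first
Goursat subgroup of `R` is invariant under `F^[m' - m]`, hence constant by transitivity; this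
forces the Goursat subgroup, and then `R`, to be everything. -/
theorem range_prod_eq_top_of_range_eq (hT : TopologicallyTransitive F) (hFc : Continuous F)
    (hFs : Surjective F) (hπ₁ : IsLocallyConstant π₁) (hπ₁s : Surjective π₁) (hπ₂s : Surjective π₂)
    {m m' : ℕ} (hmm' : m < m')
    (hR : ((π₁.comp (F.iterate m)).prod π₂).range = ((π₁.comp (F.iterate m')).prod π₂).range) :
    ((π₁.comp (F.iterate m)).prod π₂).range = ⊤ := by
  set R := ((π₁.comp (F.iterate m)).prod π₂).range
  set c : X → K₁ := fun x => π₁ (F^[m] x)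
  have hmem : ∀ x, (c x, π₂ x) ∈ R := fun x => ⟨x, rfl⟩
  have hmem' : ∀ x, (c (F^[m' - m] x), π₂ x) ∈ R := fun x => by
    simp only [c, ← iterate_add_apply, Nat.add_sub_cancel' hmm'.le, R, hR]
    exact ⟨x, rfl⟩
  set M := R.goursatFst
  have hψ : IsLocallyConstant fun x => (c x : K₁ ⧸ M) :=
    (hπ₁.comp _).comp_continuous (hFc.iterate m)
  have hper : ∀ x, (c (F^[m' - m] x) : K₁ ⧸ M) = c x := fun x => by
    rw [QuotientGroup.eq, Subgroup.mem_goursatFst]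
    simpa using R.mul_mem (R.inv_mem (hmem' x)) (hmem x)
  have hM : ∀ a, (a, (1 : K₂)) ∈ R := fun a => by
    obtain ⟨x, rfl⟩ := (hπ₁s.comp (hFs.iterate m)) a
    have := hT.apply_eq_of_iterate_invariant hFc (map_one F) hψ (Nat.sub_pos_of_lt hmm') hper x
    rw [QuotientGroup.eq] at this
    simpa [c, ← Subgroup.mem_goursatFst] using this
  refine (Subgroup.eq_top_iff' R).mpr fun ⟨a, b⟩ => ?_
  obtain ⟨x, rfl⟩ := hπ₂s b
  simpa using R.mul_mem (hM (a * (c x)⁻¹)) (hmem x)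

/-- By pigeonhole among the finitely many subgroups of `K₁ × K₂`, infinitely many failures
would produce two times `m < m'` with the same proper joint image. -/
theorem eventually_surjective_prod [Finite K₁] [Finite K₂] (hT : TopologicallyTransitive F)
    (hFc : Continuous F) (hFs : Surjective F) (hπ₁ : IsLocallyConstant π₁) (hπ₁s : Surjective π₁)
    (hπ₂s : Surjective π₂) : ∀ᶠ n in atTop, Surjective ((π₁.comp (F.iterate n)).prod π₂) := by
  set φ := fun n => (π₁.comp (F.iterate n)).prod π₂
  have key : ∀ {m m'}, m < m' → (φ m).range = (φ m').range → Surjective (φ m) := fun h hR =>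
    MonoidHom.range_eq_top.mp (hT.range_prod_eq_top_of_range_eq hFc hFs hπ₁ hπ₁s hπ₂s h hR)
  by_contra h
  rw [not_eventually, Nat.frequently_atTop_iff_infinite] at h
  obtain ⟨m, hm, m', hm', hne, hR⟩ := h.exists_ne_map_eq_of_mapsTo
    (f := fun n => (φ n).range) (mapsTo_univ _ _) finite_univ
  rcases hne.lt_or_gt with h | h
  · exact hm (key h hR)
  · exact hm' (key h hR.symm)

end TopologicallyTransitive

section FiniteQuotient

variable {X : Type*} [Group X] [TopologicalSpace X] [MeasurableSpace X] [OpensMeasurableSpace X]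
  [MeasurableMul X] (μ : Measure X) [IsProbabilityMeasure μ] [μ.IsMulLeftInvariant]

/-- Left translation permutes the fibres of `φ`, so they all have measure `1 / Nat.card K`. -/
theorem measure_preimage_eq_ncard_div_s11 {K : Type*} [Group K] [Finite K] {φ : X →* K}
    (hφ : IsLocallyConstant φ) (hφs : Surjective φ) (T : Set K) :
    μ (φ ⁻¹' T) = T.ncard / Nat.card K := by
  classical
  have := Fintype.ofFinite K
  have hfib : ∀ k, μ (φ ⁻¹' {k}) = μ (φ ⁻¹' {1}) := fun k => by
    obtain ⟨x, rfl⟩ := hφs k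
    have : φ ⁻¹' {φ x} = (x⁻¹ * ·) ⁻¹' (φ ⁻¹' {1}) := by
      ext y
      simp only [mem_preimage, mem_singleton_iff, map_mul, map_inv, inv_mul_eq_one]
      exact eq_comm
    rw [this, measure_preimage_mul]
  have hcount : ∀ S : Set K, μ (φ ⁻¹' S) = S.ncard * μ (φ ⁻¹' {1}) := fun S => by
    rw [← S.coe_toFinset, ← sum_measure_preimage_singleton _ fun k _ =>
      (hφ.isOpen_fiber k).measurableSet]
    simp [hfib, Set.ncard_eq_toFinset_card']
  have hone : μ (φ ⁻¹' {1}) * Nat.card K = 1 := by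
    rw [mul_comm, ← ncard_univ, ← hcount, preimage_univ, measure_univ]
  rw [hcount, ENNReal.eq_inv_of_mul_eq_one_left hone, div_eq_mul_inv]

theorem measure_preimage_inter_preimage {K₁ K₂ : Type*} [Group K₁] [Group K₂] [Finite K₁]
    [Finite K₂] {φ₁ : X →* K₁} {φ₂ : X →* K₂} (hφ₁ : IsLocallyConstant φ₁)
    (hφ₂ : IsLocallyConstant φ₂) (hφs : Surjective (φ₁.prod φ₂)) (T₁ : Set K₁) (T₂ : Set K₂) :
    μ (φ₁ ⁻¹' T₁ ∩ φ₂ ⁻¹' T₂) = μ (φ₁ ⁻¹' T₁) * μ (φ₂ ⁻¹' T₂) := by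
  have hφ : IsLocallyConstant (φ₁.prod φ₂) := hφ₁.prodMk hφ₂
  have hφ₁s : Surjective φ₁ := fun k => (hφs (k, 1)).imp fun _ hx => congrArg Prod.fst hx
  have hφ₂s : Surjective φ₂ := fun k => (hφs (1, k)).imp fun _ hx => congrArg Prod.snd hx
  rw [show φ₁ ⁻¹' T₁ ∩ φ₂ ⁻¹' T₂ = φ₁.prod φ₂ ⁻¹' T₁ ×ˢ T₂ from rfl,
    measure_preimage_eq_ncard_div_s11 μ hφ hφs, measure_preimage_eq_ncard_div_s11 μ hφ₁ hφ₁s,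
    measure_preimage_eq_ncard_div_s11 μ hφ₂ hφ₂s, ncard_prod, Nat.card_prod, Nat.cast_mul,
    Nat.cast_mul, ENNReal.mul_div_mul_comm (by simp) (by simp)]

end FiniteQuotient

namespace TopologicallyTransitive

variable {X : Type*} [Group X] [TopologicalSpace X] [IsTopologicalGroup X] [CompactSpace X]
  [T2Space X] [MeasurableSpace X] [BorelSpace X] (μ : Measure X) [μ.IsHaarMeasure]
  {F : X →* X}

theorem measurePreserving (hT : TopologicallyTransitive F) (hFc : Continuous F) :
    MeasurePreserving F μ μ :=
  F.measurePreserving hFc (hT.surjective_s11 hFc) rfl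

theorem eventually_measure_preimage_inter_eq [IsProbabilityMeasure μ] {K₁ K₂ : Type*} [Group K₁]
    [Group K₂] [Finite K₁] [Finite K₂] {π₁ : X →* K₁} {π₂ : X →* K₂}
    (hT : TopologicallyTransitive F) (hFc : Continuous F) (hπ₁ : IsLocallyConstant π₁)
    (hπ₂ : IsLocallyConstant π₂) (hπ₁s : Surjective π₁) (hπ₂s : Surjective π₂)
    (T₁ : Set K₁) (T₂ : Set K₂) :
    ∀ᶠ n in atTop, μ (F^[n] ⁻¹' (π₁ ⁻¹' T₁) ∩ π₂ ⁻¹' T₂) = μ (π₁ ⁻¹' T₁) * μ (π₂ ⁻¹' T₂) := by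
  filter_upwards [hT.eventually_surjective_prod hFc (hT.surjective_s11 hFc) hπ₁ hπ₁s hπ₂s] with n hn
  rw [← ((hT.measurePreserving μ hFc).iterate n).measure_preimage
    (hπ₁ T₁).measurableSet.nullMeasurableSet]
  exact measure_preimage_inter_preimage μ (φ₁ := π₁.comp (F.iterate n))
    (hπ₁.comp_continuous (hFc.iterate n)) hπ₂ hn T₁ T₂

end TopologicallyTransitive

theorem ENNReal.tendsto_of_forall_approx {ι : Type*} {l : Filter ι} {u : ι → ℝ≥0∞} {a : ℝ≥0∞}
    (ha : a ≠ ∞) (h : ∀ ε > 0, ∃ v : ι → ℝ≥0∞, ∃ b, Tendsto v l (𝓝 b) ∧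
      (∀ i, u i ≤ v i + ε ∧ v i ≤ u i + ε) ∧ a ≤ b + ε ∧ b ≤ a + ε) :
    Tendsto u l (𝓝 a) := by
  rw [ENNReal.tendsto_nhds ha]
  intro ε hε
  rcases eq_or_ne ε ∞ with rfl | hε'
  · exact .of_forall fun i => by simp
  have hε3 : 0 < ε / 3 := ENNReal.div_pos hε.ne' (by norm_num)
  obtain ⟨v, b, hv, huv, hab, hba⟩ := h (ε / 3) hε3
  have hb : b ≠ ∞ := ne_top_of_le_ne_top (by finiteness) hba
  filter_upwards [(ENNReal.tendsto_nhds hb).mp hv (ε / 3) hε3] with i ⟨hbv, hvb⟩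
  refine ⟨tsub_le_iff_right.mpr ?_, ?_⟩
  · calc a ≤ b + ε / 3 := hab
      _ ≤ v i + ε / 3 + ε / 3 := by gcongr; exact tsub_le_iff_right.mp hbv
      _ ≤ u i + ε / 3 + ε / 3 + ε / 3 := by gcongr; exact (huv i).2
      _ = u i + ε := by rw [add_assoc, add_assoc, ← add_assoc (ε / 3), ENNReal.add_thirds]
  · calc u i ≤ v i + ε / 3 := (huv i).1
      _ ≤ b + ε / 3 + ε / 3 := by gcongr
      _ ≤ a + ε / 3 + ε / 3 + ε / 3 := by gcongr
      _ = a + ε := by rw [add_assoc, add_assoc, ← add_assoc (ε / 3), ENNReal.add_thirds]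

section Approximation

variable {α : Type*} [MeasurableSpace α] {μ : Measure α}

theorem measure_preimage_inter_le_add {f : α → α} (hf : MeasurePreserving f μ μ)
    (A A' B B' : Set α) :
    μ (f ⁻¹' A ∩ B) ≤ μ (f ⁻¹' A' ∩ B') + (μ (A ∆ A') + μ (B ∆ B')) := by
  calc μ (f ⁻¹' A ∩ B) ≤ μ ((f ⁻¹' A' ∩ B') ∪ (f ⁻¹' (A ∆ A') ∪ B ∆ B')) := by
        refine measure_mono fun x ⟨hxA, hxB⟩ => ?_
        by_cases hA' : f x ∈ A' <;> by_cases hB' : x ∈ B' <;>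
          simp_all [Set.mem_symmDiff]
    _ ≤ μ (f ⁻¹' A' ∩ B') + (μ (A ∆ A') + μ (B ∆ B')) := by
        grw [measure_union_le, measure_union_le, hf.measure_preimage_le]

theorem measure_mul_measure_le_add [IsProbabilityMeasure μ] (A A' B B' : Set α) :
    μ A * μ B ≤ μ A' * μ B' + (μ (A ∆ A') + μ (B ∆ B')) := by
  have hA : μ A ≤ μ A' + μ (A ∆ A') := tsub_le_iff_left.mp le_measure_symmDiff
  have hB : μ B ≤ μ B' + μ (B ∆ B') := tsub_le_iff_left.mp le_measure_symmDiff
  calc μ A * μ B ≤ (μ A' + μ (A ∆ A')) * μ B := by gcongr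
    _ ≤ μ A' * μ B + μ (A ∆ A') := by
        rw [add_mul]; gcongr; exact mul_le_of_le_one_right' prob_le_one
    _ ≤ μ A' * (μ B' + μ (B ∆ B')) + μ (A ∆ A') := by gcongr
    _ ≤ μ A' * μ B' + (μ (A ∆ A') + μ (B ∆ B')) := by
        rw [mul_add, add_assoc, add_comm (μ (A ∆ A'))]; gcongr
        exact mul_le_of_le_one_left' prob_le_one

/-- Both sides of the mixing relation are `1`-Lipschitz in each set for the distance
`μ (s ∆ t)`, uniformly in `n`. -/
theorem tendsto_measure_preimage_inter_of_dense [IsProbabilityMeasure μ] {f : ℕ → α → α}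
    (hf : ∀ n, MeasurePreserving (f n) μ μ) {C : Set (Set α)}
    (hC : ∀ s, MeasurableSet s → ∀ ε > 0, ∃ t ∈ C, μ (t ∆ s) < ε)
    (hmix : ∀ s ∈ C, ∀ t ∈ C, Tendsto (fun n => μ (f n ⁻¹' s ∩ t)) atTop (𝓝 (μ s * μ t)))
    {A B : Set α} (hA : MeasurableSet A) (hB : MeasurableSet B) :
    Tendsto (fun n => μ (f n ⁻¹' A ∩ B)) atTop (𝓝 (μ A * μ B)) := by
  refine ENNReal.tendsto_of_forall_approx (by finiteness) fun ε hε => ?_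
  obtain ⟨A', hA'C, hA'⟩ := hC A hA (ε / 2) (ENNReal.half_pos hε.ne')
  obtain ⟨B', hB'C, hB'⟩ := hC B hB (ε / 2) (ENNReal.half_pos hε.ne')
  have he : μ (A' ∆ A) + μ (B' ∆ B) ≤ ε := by
    grw [hA', hB', ENNReal.add_halves]
  have he' : μ (A ∆ A') + μ (B ∆ B') ≤ ε := by rwa [symmDiff_comm A, symmDiff_comm B]
  refine ⟨_, _, hmix A' hA'C B' hB'C, fun n => ⟨?_, ?_⟩, ?_, ?_⟩
  · grw [measure_preimage_inter_le_add (hf n) A A' B B', he']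
  · grw [measure_preimage_inter_le_add (hf n) A' A B' B, he]
  · grw [measure_mul_measure_le_add A A' B B', he']
  · grw [measure_mul_measure_le_add A' A B' B, he]

end Approximation

theorem exists_cylinder_measure_symmDiff_lt {ι G : Type*} [Countable ι] [Countable G]
    [TopologicalSpace G] [DiscreteTopology G] [MeasurableSpace (ι → G)] [BorelSpace (ι → G)]
    (μ : Measure (ι → G)) [IsFiniteMeasure μ] {A : Set (ι → G)} (hA : MeasurableSet A)
    {ε : ℝ≥0∞} (hε : 0 < ε) :
    ∃ (E : Finset ι) (T : Set (E → G)), μ ((E.restrict ⁻¹' T) ∆ A) < ε := by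
  let : MeasurableSpace G := ⊤
  have : BorelSpace G := ⟨borel_eq_top_of_discrete.symm⟩
  have hgen : ‹MeasurableSpace (ι → G)› =
      MeasurableSpace.generateFrom (measurableCylinders fun _ => G) := by
    rw [generateFrom_measurableCylinders, ‹BorelSpace (ι → G)›.measurable_eq]
    exact (Pi.borelSpace (X := fun _ : ι => G)).measurable_eq.symm
  obtain ⟨t, ht, htA⟩ := exists_measure_symmDiff_lt_of_generateFrom_isSetRing (μ := μ)
    isSetRing_measurableCylinders ⟨{univ}, countable_singleton _,
      singleton_subset_iff.mpr (univ_mem_measurableCylinders _), by simp⟩ hgen hA hε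
  obtain ⟨E, T, -, rfl⟩ := (mem_measurableCylinders t).mp ht
  exact ⟨E, T, htA⟩

theorem stmt11_general (d : ℕ) (G : Type*) [Group G] [Finite G]
    [TopologicalSpace G] [DiscreteTopology G]
    [MeasurableSpace ((Fin d → ℤ) → G)] [BorelSpace ((Fin d → ℤ) → G)]
    (F : ((Fin d → ℤ) → G) → ((Fin d → ℤ) → G))
    (hFcont : Continuous F)
    (hFhom : ∀ a b : (Fin d → ℤ) → G, F (a * b) = F a * F b)
    (hFtrans : TopologicallyTransitive F)
    (μ : Measure ((Fin d → ℤ) → G))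
    (hμ : μ.IsHaarMeasure) (hμprob : IsProbabilityMeasure μ) :
    MeasurePreserving F μ μ ∧
      ∀ A B : Set ((Fin d → ℤ) → G), MeasurableSet A → MeasurableSet B →
        Tendsto (fun n : ℕ => μ (F^[n] ⁻¹' A ∩ B)) atTop (nhds (μ A * μ B)) := by
  have hT : TopologicallyTransitive (MonoidHom.mk' F hFhom) := hFtrans
  have hF : MeasurePreserving F μ μ := hT.measurePreserving μ hFcont
  let restrict (E : Finset (Fin d → ℤ)) : ((Fin d → ℤ) → G) →* (E → G) :=
    MonoidHom.pi fun i => Pi.evalMonoidHom _ i.1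
  have hrestrict (E : Finset (Fin d → ℤ)) :
      IsLocallyConstant (restrict E) ∧ Surjective (restrict E) :=
    ⟨(IsLocallyConstant.iff_continuous _).mpr (Finset.continuous_restrict (A := fun _ => G) E),
      Subtype.val_injective.surjective_comp_right⟩
  refine ⟨hF, fun A B hA hB => tendsto_measure_preimage_inter_of_dense (hF.iterate ·)
    (C := {s | ∃ (E : Finset _) (T : Set (E → G)), s = E.restrict ⁻¹' T}) ?_ ?_ hA hB⟩
  · intro s hs ε hε
    obtain ⟨E, T, h⟩ := exists_cylinder_measure_symmDiff_lt μ hs hε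
    exact ⟨_, ⟨E, T, rfl⟩, h⟩
  · rintro _ ⟨E, T, rfl⟩ _ ⟨S, U, rfl⟩
    refine tendsto_const_nhds.congr' (EventuallyEq.symm ?_)
    exact hT.eventually_measure_preimage_inter_eq μ hFcont (hrestrict E).1 (hrestrict S).1
      (hrestrict E).2 (hrestrict S).2 T U

theorem stmt11 (d : ℕ) (hd : 0 < d) (G : Type*) [Group G] [Finite G]
    [TopologicalSpace G] [DiscreteTopology G]
    [MeasurableSpace ((Fin d → ℤ) → G)] [BorelSpace ((Fin d → ℤ) → G)]
    (F : ((Fin d → ℤ) → G) → ((Fin d → ℤ) → G))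
    (hFcont : Continuous F)
    (hFhom : ∀ a b : (Fin d → ℤ) → G, F (a * b) = F a * F b)
    (hFshift : ∀ (u : Fin d → ℤ) (c : (Fin d → ℤ) → G),
      F (fun v => c (v + u)) = fun v => F c (v + u))
    (hFtrans : TopologicallyTransitive F)
    (μ : Measure ((Fin d → ℤ) → G))
    (hμ : μ.IsHaarMeasure) (hμprob : IsProbabilityMeasure μ) :
    MeasurePreserving F μ μ ∧
      ∀ A B : Set ((Fin d → ℤ) → G), MeasurableSet A → MeasurableSet B →
        Tendsto (fun n : ℕ => μ (F^[n] ⁻¹' A ∩ B)) atTop (nhds (μ A * μ B)) :=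
  stmt11_general d G F hFcont hFhom hFtrans μ hμ hμprob
end
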